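/- arXiv:1807.11026 — 2 statements merged into one kernel-verified Lean document; each statement's English description precedes it below -/
import Mathlib

section
/- For every rational tangle word (a_1, …, a_n), every maximal run of NSI syllables other than the last one contains an even number of crossings; that is, the sum of |a_i| over the syllables a_i of the run is even. -/
/-- The three connectivity states of a partially built rational tangle:
`H = {NW–NE, SW–SE}`, `V = {NW–SW, NE–SE}`, `X = {NW–SE, NE–SW}`. -/
inductive TState : Type
  | H
  | V
  | X
  deriving DecidableEq

/-- Effect of a bottom crossing (a twist of SW and SE) on the connectivity state. -/
def bstep : TState → TState
  | .H => .H
  | .V => .X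
  | .X => .V

/-- Effect of a right crossing (a twist of NE and SE) on the connectivity state. -/
def rstep : TState → TState
  | .V => .V
  | .H => .X
  | .X => .H

/-- `step true` is a bottom crossing, `step false` is a right crossing. -/
def step : Bool → TState → TState
  | true => bstep
  | false => rstep

/-- The twist direction of the (0-based) `i`-th syllable: bottom iff `i` is even
(1-based odd syllables are bottom twists). -/
def sylDir (i : ℕ) : Bool := decide (i % 2 = 0)

/-- The state in which a crossing of the (0-based) `i`-th syllable is a self-intersection:
`H` for bottom syllables, `V` for right syllables. -/
def siState (i : ℕ) : TState := if i % 2 = 0 then TState.H else TState.V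

/-- Process a list of syllables starting from state `s`; the Boolean `b` records
whether the next syllable is a bottom syllable. Each syllable `a` applies
`|a|` crossings of the appropriate direction. -/
def runWord : List ℤ → Bool → TState → TState
  | [], _, s => s
  | a :: t, b, s => runWord t (!b) ((step b)^[a.natAbs] s)

/-- The connectivity state at the start of the (0-based) `i`-th syllable of the word `w`
(a rational tangle word starts in state `V`). -/
def stateAt (w : List ℤ) (i : ℕ) : TState := runWord (w.take i) true TState.V

/-- The (0-based) `i`-th syllable of `w` is an SI syllable. -/
def IsSISyl (w : List ℤ) (i : ℕ) : Prop := stateAt w i = siState i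

instance (w : List ℤ) (i : ℕ) : Decidable (IsSISyl w i) :=
  inferInstanceAs (Decidable (_ = _))

/-- `IsNSIRun w l r` : the syllables with (0-based) indices in `[l, r)` form a maximal run
of NSI syllables of `w`. -/
def IsNSIRun (w : List ℤ) (l r : ℕ) : Prop :=
  l < r ∧ r ≤ w.length ∧ (∀ j, l ≤ j → j < r → ¬ IsSISyl w j) ∧
    (l = 0 ∨ IsSISyl w (l - 1)) ∧ (r = w.length ∨ IsSISyl w r)

/-- The last maximal run of NSI syllables: a maximal run such that every later syllable
is an SI syllable. -/
def IsLastNSIRun (w : List ℤ) (l r : ℕ) : Prop :=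
  IsNSIRun w l r ∧ ∀ j, r ≤ j → j < w.length → IsSISyl w j

/-- Run shape (a): a single even syllable. -/
def RunA (w : List ℤ) (l r : ℕ) : Prop := r = l + 1 ∧ Even (w.getD l 0)

/-- Run shape (b): two consecutive odd syllables. -/
def RunB (w : List ℤ) (l r : ℕ) : Prop :=
  r = l + 2 ∧ Odd (w.getD l 0) ∧ Odd (w.getD (l + 1) 0)

/-- Run shape (c): an odd syllable, then a nonempty string of even syllables,
then a final odd syllable. -/
def RunC (w : List ℤ) (l r : ℕ) : Prop :=
  l + 3 ≤ r ∧ Odd (w.getD l 0) ∧ Odd (w.getD (r - 1) 0) ∧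
    ∀ j, l < j → j < r - 1 → Even (w.getD j 0)

/-- Run shape (a'): a single odd syllable. -/
def RunA' (w : List ℤ) (l r : ℕ) : Prop := r = l + 1 ∧ Odd (w.getD l 0)

/-- Run shape (b'): an odd syllable followed by a nonempty string of even syllables. -/
def RunB' (w : List ℤ) (l r : ℕ) : Prop :=
  l + 2 ≤ r ∧ Odd (w.getD l 0) ∧ ∀ j, l < j → j < r → Even (w.getD j 0)


lemma step_step (b : Bool) (s : TState) : step b (step b s) = s := by
  cases b <;> cases s <;> rfl

lemma step_iterate (b : Bool) (n : ℕ) (s : TState) :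
    (step b)^[n] s = if n % 2 = 0 then s else step b s := by
  induction n with
  | zero => simp
  | succ n ih =>
    rw [Function.iterate_succ_apply', ih]
    rcases Nat.mod_two_eq_zero_or_one n with h | h
    · have h1 : (n+1) % 2 = 1 := by omega
      simp [h, h1]
    · have h1 : (n+1) % 2 = 0 := by omega
      simp [h, h1, step_step]

lemma runWord_append (u v : List ℤ) (b : Bool) (s : TState) :
    runWord (u ++ v) b s = runWord v ((!·)^[u.length] b) (runWord u b s) := by
  induction u generalizing b s with
  | nil => rfl
  | cons a t ih =>
    show runWord (t ++ v) (!b) ((step b)^[a.natAbs] s)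
        = runWord v ((!·)^[(a :: t).length] b) (runWord t (!b) ((step b)^[a.natAbs] s))
    rw [ih, List.length_cons, Function.iterate_succ_apply]

lemma sylDir_succ (i : ℕ) : sylDir (i+1) = !sylDir i := by
  unfold sylDir
  rcases Nat.mod_two_eq_zero_or_one i with h | h
  · have h1 : (i+1) % 2 = 1 := by omega
    simp [h, h1]
  · have h1 : (i+1) % 2 = 0 := by omega
    simp [h, h1]

lemma not_iterate_true (i : ℕ) : (!·)^[i] true = sylDir i := by
  induction i with
  | zero => rfl
  | succ i ih => rw [Function.iterate_succ_apply', ih, sylDir_succ]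

lemma siState_eq (i : ℕ) : siState i = cond (sylDir i) .H .V := by
  unfold siState sylDir
  rcases Nat.mod_two_eq_zero_or_one i with h | h <;> simp [h]

lemma stateAt_succ (w : List ℤ) (i : ℕ) (h : i < w.length) :
    stateAt w (i+1) = (step (sylDir i))^[(w.getD i 0).natAbs] (stateAt w i) := by
  unfold stateAt
  rw [List.take_succ, runWord_append]
  have hl : (w.take i).length = i := by
    simp [List.length_take, Nat.min_eq_left h.le]
  have hg : w[i]? = some (w.getD i 0) := by
    rw [List.getD_eq_getElem w 0 h, List.getElem?_eq_getElem h]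
  rw [hl, not_iterate_true, hg]
  rfl

/-- every maximal run of NSI syllables other than the last one contains an
even number of crossings, i.e. the sum of `|a_j|` over the syllables of the run is even. -/
theorem nonlast_run_even_crossings (w : List ℤ) (l r : ℕ) (hrun : IsNSIRun w l r)
    (hnotlast : ∃ j, r ≤ j ∧ j < w.length ∧ ¬ IsSISyl w j) :
    Even (∑ j ∈ Finset.Ico l r, (w.getD j 0).natAbs) := by
  obtain ⟨hlr, hrlen, hnsi, hstart, hend⟩ := hrun
  obtain ⟨j, hrj, hjlen, _⟩ := hnotlast
  have hSIr : IsSISyl w r := by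
    rcases hend with h | h
    · omega
    · exact h
  have hbase : stateAt w l = cond (sylDir l) .V .H := by
    by_cases hl0 : l = 0
    · subst hl0; rfl
    · have hSI : stateAt w (l-1) = siState (l-1) := hstart.resolve_left hl0
      have hl1 : l - 1 < w.length := by omega
      have hl : l = (l-1) + 1 := by omega
      have hs : stateAt w l
          = (step (sylDir (l-1)))^[(w.getD (l-1) 0).natAbs] (stateAt w (l-1)) := by
        conv_lhs => rw [hl]
        exact stateAt_succ w (l-1) hl1
      have hfix : step (sylDir (l-1)) (cond (sylDir (l-1)) .H .V)
          = cond (sylDir (l-1)) .H .V := by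
        cases sylDir (l-1) <;> rfl
      have hcc : cond (sylDir (l-1)) TState.H TState.V = cond (sylDir l) TState.V TState.H := by
        conv_rhs => rw [hl, sylDir_succ]
        cases sylDir (l-1) <;> rfl
      rw [hs, hSI, siState_eq, step_iterate]
      split
      · exact hcc
      · rw [hfix]; exact hcc
  have key : ∀ k, l + k ≤ r →
      ((stateAt w (l+k) = .X ↔ ¬ Even (∑ j ∈ Finset.Ico l (l+k), (w.getD j 0).natAbs)) ∧
       (l + k < r → (stateAt w (l+k) = .X ∨ stateAt w (l+k) = cond (sylDir (l+k)) .V .H))) := by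
    intro k
    induction k with
    | zero =>
      intro _
      constructor
      · rw [Nat.add_zero, hbase]
        simp only [Finset.Ico_self, Finset.sum_empty, Even.zero, not_true, iff_false]
        cases sylDir l <;> decide
      · intro _
        rw [Nat.add_zero]
        exact Or.inr hbase
    | succ k ih =>
      intro hk1
      have hik : l + k < r := by omega
      obtain ⟨ihp, ihm⟩ := ih (by omega)
      have hmem := ihm hik
      set i := l + k with hi
      have hiw : i < w.length := by omega
      have hstep := stateAt_succ w i hiw
      rw [step_iterate] at hstep
      have hsum : (∑ j ∈ Finset.Ico l (i+1), (w.getD j 0).natAbs)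
          = (∑ j ∈ Finset.Ico l i, (w.getD j 0).natAbs) + (w.getD i 0).natAbs :=
        Finset.sum_Ico_succ_top (by omega) _
      have hswap1 : step (sylDir i) TState.X = cond (sylDir i) .V .H := by
        cases sylDir i <;> rfl
      have hswap2 : step (sylDir i) (cond (sylDir i) .V .H) = TState.X := by
        cases sylDir i <;> rfl
      have hne : cond (sylDir i) TState.V TState.H ≠ TState.X := by
        cases sylDir i <;> decide
      have hparity : stateAt w (i+1) = .X ↔
          ¬ Even (∑ j ∈ Finset.Ico l (i+1), (w.getD j 0).natAbs) := by
        rw [hsum, Nat.even_add]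
        rcases Nat.mod_two_eq_zero_or_one (w.getD i 0).natAbs with he | ho
        · rw [if_pos he] at hstep
          rw [hstep, ihp]
          have hev : Even (w.getD i 0).natAbs := Nat.even_iff.mpr he
          exact not_congr ⟨fun h => iff_of_true h hev, fun h => h.mpr hev⟩
        · rw [if_neg (by omega)] at hstep
          have hnev : ¬ Even (w.getD i 0).natAbs := by
            rw [Nat.even_iff]; omega
          have hXiff : (stateAt w (i+1) = .X) ↔ ¬ (stateAt w i = .X) := by
            rcases hmem with hX | hO
            · rw [hstep, hX, hswap1]
              simp [hne, hX]
            · rw [hstep, hO, hswap2]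
              simp [hne]
          rw [hXiff, ihp]
          exact not_congr ⟨fun h => iff_of_false h hnev, fun h hs => hnev (h.mp hs)⟩
      have hmem1 : i + 1 < r →
          (stateAt w (i+1) = .X ∨ stateAt w (i+1) = cond (sylDir (i+1)) .V .H) := by
        intro hlt
        left
        have hnsi1 : ¬ IsSISyl w (i+1) := hnsi (i+1) (by omega) hlt
        have hpair : stateAt w (i+1) = .X ∨ stateAt w (i+1) = cond (sylDir i) .V .H := by
          rw [hstep]
          split
          · exact hmem
          · rcases hmem with hX | hO
            · rw [hX, hswap1]
              exact Or.inr rfl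
            · rw [hO, hswap2]
              exact Or.inl rfl
        have hsi1 : siState (i+1) = cond (sylDir i) .V .H := by
          rw [siState_eq, sylDir_succ]
          cases sylDir i <;> rfl
        rcases hpair with h | h
        · exact h
        · exact absurd (show IsSISyl w (i+1) from h.trans hsi1.symm) hnsi1
      exact ⟨hparity, hmem1⟩
  obtain ⟨hiff, -⟩ := key (r - l) (by omega)
  have hrr : l + (r - l) = r := by omega
  rw [hrr] at hiff
  have hnX : stateAt w r ≠ .X := by
    have h : stateAt w r = siState r := hSIr
    rw [h, siState_eq]
    cases sylDir r <;> decide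
  by_contra hodd
  exact hnX (hiff.mpr hodd)
end

section
/- Let k ≥ 3, let n_1 and n_k be odd natural numbers, and let n_i be even for all 1 < i < k. In the resolution game on (n_1, …, n_k), the second player can force the resulting word to satisfy s_1 = −s_k ∈ {1, −1} and s_i = 0 for all 1 < i < k. -/
/-!
Split every syllable into adjacent pairs of crossings `(i, 2j)`, `(i, 2j + 1)`. Only the first
and the last syllable, being odd, keep an unpaired last crossing, and these two crossings are
paired with each other. This gives a fixed-point-free involution `f` of the crossings, and the
second player answers every move `(c, s)` with `(f c, -s)`. In the final play partners carry
opposite signs, so every middle syllable sums to `0`, while the first and last sums equal the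
sign `±1` of the first leftover crossing and that of its partner, i.e. opposite numbers.
-/

section SignGame

variable {C : Type*} [Fintype C]

/-- A play of the sign-assignment game is a list of moves, each assigning a sign to a
crossing; it is legal if no crossing is chosen twice and every sign is `+1` or `-1`. -/
def LegalPlay (p : List (C × ℤ)) : Prop :=
  (p.map Prod.fst).Nodup ∧ ∀ m ∈ p, m.2 = 1 ∨ m.2 = -1

/-- The play `p` follows the strategy `σ` of the player who moves at all positions whose
number of prior moves is congruent to `parity` mod 2 (`parity = 0`: first player;
`parity = 1`: second player). -/
def Follows (parity : ℕ) (σ : List (C × ℤ) → C × ℤ) (p : List (C × ℤ)) : Prop :=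
  ∀ (i : ℕ) (hi : i < p.length), i % 2 = parity → p.get ⟨i, hi⟩ = σ (p.take i)

/-- The strategy `σ` always produces a legal move (an unchosen crossing with sign `±1`)
at the positions where its player is to move. -/
def LegalStrat (parity : ℕ) (σ : List (C × ℤ) → C × ℤ) : Prop :=
  ∀ p : List (C × ℤ), LegalPlay p → p.length % 2 = parity → p.length < Fintype.card C →
    (σ p).1 ∉ p.map Prod.fst ∧ ((σ p).2 = 1 ∨ (σ p).2 = -1)

/-- The player moving at positions of parity `parity` can force the predicate `P` on
complete plays: they have a legal strategy such that every complete legal play following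
it satisfies `P`. -/
def CanForce (parity : ℕ) (P : List (C × ℤ) → Prop) : Prop :=
  ∃ σ : List (C × ℤ) → C × ℤ, LegalStrat parity σ ∧
    ∀ p : List (C × ℤ), LegalPlay p → p.length = Fintype.card C → Follows parity σ p → P p

end SignGame

/-- The crossings of the resolution game on syllable sizes `n = (n_1, …, n_k)`:
pairs `(i, j)` with `i` a syllable index and `j < n_i`. -/
abbrev Cr (n : List ℕ) : Type := Σ i : Fin n.length, Fin (n.get i)

/-- The resulting word `(s_1, …, s_k)` of a complete play of the resolution game:
`s_i` is the sum of the signs assigned to the crossings of the `i`-th syllable. -/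
def result (n : List ℕ) (p : List (Cr n × ℤ)) : List ℤ :=
  (List.finRange n.length).map fun i =>
    ((p.filter fun m => decide (m.1.1 = i)).map Prod.snd).sum

section PairClosed

variable {C : Type*}

def PairClosed (f : C → C) (p : List (C × ℤ)) : Prop :=
  ∀ m ∈ p, (f m.1, -m.2) ∈ p

variable {f : C → C} (hinv : Function.Involutive f)
include hinv

theorem PairClosed.partner_notMem (hfree : ∀ c, f c ≠ c) {q : List (C × ℤ)}
    (hq : PairClosed f q) {a : C × ℤ} (hnd : ((q ++ [a]).map Prod.fst).Nodup) :
    f a.1 ∉ (q ++ [a]).map Prod.fst := by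
  rw [List.map_append] at hnd
  have ha : a.1 ∉ q.map Prod.fst := fun h => (List.nodup_append.1 hnd).2.2 _ h _ (by simp) rfl
  simp only [List.map_append, List.map_cons, List.map_nil, List.mem_append, List.mem_map,
    List.mem_singleton, not_or, not_exists, not_and]
  refine ⟨fun m hm hma => ha (List.mem_map.2 ⟨_, hq m hm, ?_⟩), hfree a.1⟩
  simp [hma, hinv a.1]

theorem PairClosed.append_pair {q : List (C × ℤ)} (hq : PairClosed f q) (a : C × ℤ) :
    PairClosed f (q ++ [a, (f a.1, -a.2)]) := by
  intro m hm
  simp only [List.mem_append, List.mem_cons, List.not_mem_nil, or_false] at hm ⊢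
  rcases hm with hm | rfl | rfl
  · exact Or.inl (hq m hm)
  · exact Or.inr (Or.inr rfl)
  · simp [hinv a.1]

end PairClosed

section Strategy

variable {C : Type*} [Fintype C]

theorem CanForce.mono {parity : ℕ} {P Q : List (C × ℤ) → Prop} (hP : CanForce parity P)
    (hPQ : ∀ p, LegalPlay p → p.length = Fintype.card C → P p → Q p) : CanForce parity Q := by
  obtain ⟨σ, hσ, hforce⟩ := hP
  exact ⟨σ, hσ, fun p hp hlen hfol => hPQ p hp hlen (hforce p hp hlen hfol)⟩

theorem even_card_of_involutive {f : C → C} (hinv : Function.Involutive f)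
    (hfree : ∀ c, f c ≠ c) : Even (Fintype.card C) := by
  have h : ((Fintype.card C : ℕ) : ZMod 2) = 0 := by
    rw [← Finset.card_univ, Finset.card_eq_sum_ones, Nat.cast_sum]
    exact Finset.sum_involution (fun a _ => f a) (fun a _ => by decide)
      (fun a _ _ => hfree a) (fun a _ => Finset.mem_univ _) (fun a _ => hinv a)
  exact even_iff_two_dvd.2 ((ZMod.natCast_eq_zero_iff _ _).1 h)

variable [DecidableEq C]

theorem exists_notMem_map_fst {p : List (C × ℤ)} (hlt : p.length < Fintype.card C) :
    ∃ c, c ∉ p.map Prod.fst := by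
  by_contra! h
  have hsub : Finset.univ ⊆ (p.map Prod.fst).toFinset := fun c _ => List.mem_toFinset.2 (h c)
  have := (Finset.card_le_card hsub).trans (List.toFinset_card_le _)
  simp only [Finset.card_univ, List.length_map] at this
  omega

theorem mem_map_fst_of_length_eq_card {p : List (C × ℤ)} (hnd : (p.map Prod.fst).Nodup)
    (hlen : p.length = Fintype.card C) (c : C) : c ∈ p.map Prod.fst := by
  have huniv : (p.map Prod.fst).toFinset = Finset.univ := by
    apply Finset.eq_univ_of_card
    rw [List.toFinset_card_of_nodup hnd, List.length_map, hlen]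
  simp [← List.mem_toFinset, huniv]

variable [Nonempty C]

noncomputable def freeMove (p : List (C × ℤ)) : C × ℤ :=
  (if h : ∃ c, c ∉ p.map Prod.fst then h.choose else Classical.arbitrary C, 1)

theorem freeMove_fst_notMem {p : List (C × ℤ)} (hlt : p.length < Fintype.card C) :
    (freeMove p).1 ∉ p.map Prod.fst := by
  have h := exists_notMem_map_fst hlt
  simpa only [freeMove, dif_pos h] using h.choose_spec

/-- The fallback `freeMove` only serves legality: a play following this strategy never reaches
it when `f` is a fixed-point-free involution. -/
noncomputable def pairStrat (f : C → C) (p : List (C × ℤ)) : C × ℤ :=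
  match p.getLast? with
  | some m => if f m.1 ∈ p.map Prod.fst then freeMove p else (f m.1, -m.2)
  | none => freeMove p

theorem pairStrat_concat {f : C → C} {q : List (C × ℤ)} {a : C × ℤ}
    (h : f a.1 ∉ (q ++ [a]).map Prod.fst) : pairStrat f (q ++ [a]) = (f a.1, -a.2) := by
  simp only [pairStrat, List.getLast?_concat, if_neg h]

theorem legalStrat_pairStrat (f : C → C) (parity : ℕ) : LegalStrat parity (pairStrat f) := by
  intro p hp _ hlt
  unfold pairStrat
  split
  case h_1 m hm =>
    split_ifs
    · exact ⟨freeMove_fst_notMem hlt, Or.inl rfl⟩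
    · rcases hp.2 m (List.mem_of_getLast? hm) with h | h <;> simp_all
  case h_2 => exact ⟨freeMove_fst_notMem hlt, Or.inl rfl⟩

theorem pairClosed_take_of_follows {f : C → C} (hinv : Function.Involutive f)
    (hfree : ∀ c, f c ≠ c) {p : List (C × ℤ)} (hp : LegalPlay p)
    (hfol : Follows 1 (pairStrat f) p) (t : ℕ) (ht : 2 * t ≤ p.length) :
    PairClosed f (p.take (2 * t)) := by
  induction t with
  | zero => simp [PairClosed]
  | succ t ih =>
    have h2t : 2 * t < p.length := by omega
    have h2t1 : 2 * t + 1 < p.length := by omega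
    set q := p.take (2 * t)
    have htake1 : p.take (2 * t + 1) = q ++ [p[2 * t]] := (List.take_concat_get' p _ h2t).symm
    have hq := ih (by omega)
    have hnd : ((q ++ [p[2 * t]]).map Prod.fst).Nodup :=
      htake1 ▸ ((p.take_sublist _).map Prod.fst).nodup hp.1
    have hreply : p[2 * t + 1] = (f p[2 * t].1, -p[2 * t].2) := by
      rw [← pairStrat_concat (hq.partner_notMem hinv hfree hnd), ← htake1]
      exact hfol (2 * t + 1) h2t1 (by omega)
    have htake2 : p.take (2 * (t + 1)) = q ++ [p[2 * t], p[2 * t + 1]] := by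
      rw [show 2 * (t + 1) = 2 * t + 1 + 1 by ring, ← List.take_concat_get' p _ h2t1, htake1]
      simp
    rw [htake2, hreply]
    exact hq.append_pair hinv _

theorem canForce_pairClosed {f : C → C} (hinv : Function.Involutive f)
    (hfree : ∀ c, f c ≠ c) : CanForce 1 (PairClosed f) := by
  refine ⟨pairStrat f, legalStrat_pairStrat f 1, fun p hp hlen hfol => ?_⟩
  obtain ⟨t, ht⟩ := even_card_of_involutive hinv hfree
  simpa [show 2 * t = p.length by omega] using
    pairClosed_take_of_follows hinv hfree hp hfol t (by omega)

end Strategy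

section Signs

variable {C : Type*} [DecidableEq C]

def signOf (p : List (C × ℤ)) (c : C) : ℤ :=
  ((p.filter fun m => m.1 = c).map Prod.snd).sum

theorem signOf_cons (m : C × ℤ) (p : List (C × ℤ)) (c : C) :
    signOf (m :: p) c = (if m.1 = c then m.2 else 0) + signOf p c := by
  by_cases h : m.1 = c <;> simp [signOf, h]

theorem signOf_eq_of_mem {p : List (C × ℤ)} (hnd : (p.map Prod.fst).Nodup) {c : C} {s : ℤ}
    (h : (c, s) ∈ p) : signOf p c = s := by
  induction p with
  | nil => simp at h
  | cons m p ih =>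
    rw [List.map_cons, List.nodup_cons] at hnd
    rw [signOf_cons]
    rcases List.mem_cons.1 h with rfl | h
    · have hp : signOf p c = 0 := by
        rw [signOf, List.filter_eq_nil_iff.2 fun m' hm' hm'c => hnd.1 ?_, List.map_nil,
          List.sum_nil]
        simpa [of_decide_eq_true hm'c] using List.mem_map_of_mem (f := Prod.fst) hm'
      simp [hp]
    · have hmc : m.1 ≠ c := fun hmc => hnd.1 (hmc ▸ List.mem_map_of_mem (f := Prod.fst) h)
      simp [hmc, ih hnd.2 h]

theorem sum_map_snd_filter_eq_sum_signOf [Fintype C] (p : List (C × ℤ)) (Q : C → Prop)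
    [DecidablePred Q] :
    ((p.filter fun m => Q m.1).map Prod.snd).sum = ∑ c with Q c, signOf p c := by
  induction p with
  | nil => simp [signOf]
  | cons m p ih =>
    simp only [signOf_cons, Finset.sum_add_distrib, Finset.sum_ite_eq, Finset.mem_filter,
      Finset.mem_univ, true_and, ← ih]
    by_cases h : Q m.1 <;> simp [h]

theorem signOf_eq_one_or_neg_one {p : List (C × ℤ)} (hp : LegalPlay p) {c : C}
    (hc : c ∈ p.map Prod.fst) : signOf p c = 1 ∨ signOf p c = -1 := by
  obtain ⟨m, hm, rfl⟩ := List.mem_map.1 hc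
  rw [signOf_eq_of_mem hp.1 hm]
  exact hp.2 m hm

theorem PairClosed.signOf_apply {f : C → C} {p : List (C × ℤ)} (hp : PairClosed f p)
    (hnd : (p.map Prod.fst).Nodup) {c : C} (hc : c ∈ p.map Prod.fst) :
    signOf p (f c) = -signOf p c := by
  obtain ⟨m, hm, rfl⟩ := List.mem_map.1 hc
  rw [signOf_eq_of_mem hnd hm, signOf_eq_of_mem hnd (hp m hm)]

end Signs

section FiberSums

variable {C ι G : Type*} [DecidableEq ι] [AddCommGroup G]
  {f : C → C} (hinv : Function.Involutive f) (hfree : ∀ c, f c ≠ c)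
  {g : C → G} (hg : ∀ c, g (f c) = -g c)
include hinv hfree hg

theorem sum_eq_zero_of_mapsTo {s : Finset C} (hs : ∀ c ∈ s, f c ∈ s) : ∑ c ∈ s, g c = 0 :=
  Finset.sum_involution (fun c _ => f c) (fun c _ => by simp [hg]) (fun c _ _ => hfree c)
    hs (fun c _ => hinv c)

theorem sum_fiber_eq_of_apply_ne [Fintype C] [DecidableEq C] (π : C → ι) {a : C}
    (ha : π (f a) ≠ π a) (hπ : ∀ c, π c = π a → c ≠ a → π (f c) = π a) :
    ∑ c with π c = π a, g c = g a := by
  have hmem : a ∈ ({c | π c = π a} : Finset C) := by simp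
  rw [← Finset.add_sum_erase _ _ hmem, add_eq_left]
  refine sum_eq_zero_of_mapsTo hinv hfree hg fun c hc => ?_
  simp only [Finset.mem_erase, Finset.mem_filter, Finset.mem_univ, true_and] at hc ⊢
  refine ⟨fun hfc => ha ?_, hπ c hc.2 hc.1⟩
  rw [← hfc, hinv, hfc, hc.2]

end FiberSums

theorem canForce_fiberSums {C ι : Type*} [Fintype C] [DecidableEq C] [Nonempty C]
    [DecidableEq ι] (π : C → ι) {f : C → C} (hinv : Function.Involutive f)
    (hfree : ∀ c, f c ≠ c) (a : C) (ha : π (f a) ≠ π a)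
    (hπ : ∀ c, c ≠ a → c ≠ f a → π (f c) = π c) :
    CanForce 1 fun p => (signOf p a = 1 ∨ signOf p a = -1) ∧
      ∑ c with π c = π a, signOf p c = signOf p a ∧
      ∑ c with π c = π (f a), signOf p c = -signOf p a ∧
      ∀ i, i ≠ π a → i ≠ π (f a) → ∑ c with π c = i, signOf p c = 0 := by
  refine (canForce_pairClosed hinv hfree).mono fun p hp hlen hclosed => ?_
  have hmem := mem_map_fst_of_length_eq_card hp.1 hlen
  have hg : ∀ c, signOf p (f c) = -signOf p c := fun c => hclosed.signOf_apply hp.1 (hmem c)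
  refine ⟨signOf_eq_one_or_neg_one hp (hmem a), ?_, ?_, ?_⟩
  · refine sum_fiber_eq_of_apply_ne hinv hfree hg π ha fun c hc hca => ?_
    rw [hπ c hca fun h => ha (h ▸ hc), hc]
  · rw [← hg a]
    refine sum_fiber_eq_of_apply_ne hinv hfree hg π (by rwa [hinv, ne_comm]) fun c hc hca => ?_
    rw [hπ c (fun h => ha (h ▸ hc).symm) hca, hc]
  · intro i hia hib
    refine sum_eq_zero_of_mapsTo hinv hfree hg fun c hc => ?_
    simp only [Finset.mem_filter, Finset.mem_univ, true_and] at hc ⊢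
    rw [hπ c (fun h => hia (h ▸ hc).symm) (fun h => hib (h ▸ hc).symm), hc]

section SwapComp

variable {C : Type*} [DecidableEq C] {g : C → C} (hg : Function.Involutive g) {a b : C}
include hg

theorem Function.Involutive.apply_swap (ha : g a = a) (hb : g b = b) (x : C) :
    g (Equiv.swap a b x) = Equiv.swap a b (g x) := by
  rcases eq_or_ne x a with rfl | hxa
  · simp [ha, hb]
  rcases eq_or_ne x b with rfl | hxb
  · simp [ha, hb]
  have hga : g x ≠ a := fun h => hxa (by rw [← hg x, h, ha])
  have hgb : g x ≠ b := fun h => hxb (by rw [← hg x, h, hb])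
  rw [Equiv.swap_apply_of_ne_of_ne hxa hxb, Equiv.swap_apply_of_ne_of_ne hga hgb]

theorem Function.Involutive.swap_apply_of_ne (ha : g a = a) (hb : g b = b) {x : C}
    (hxa : x ≠ a) (hxb : x ≠ b) : Equiv.swap a b (g x) = g x := by
  rw [← hg.apply_swap ha hb, Equiv.swap_apply_of_ne_of_ne hxa hxb]

theorem Function.Involutive.swap_comp (ha : g a = a) (hb : g b = b) :
    Function.Involutive (Equiv.swap a b ∘ g) := fun x => by
  simp only [Function.comp_apply, hg.apply_swap ha hb, Equiv.swap_apply_self, hg x]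

theorem Function.Involutive.swap_apply_ne_self (hab : a ≠ b)
    (hfix : ∀ x, g x = x ↔ x = a ∨ x = b) (x : C) : Equiv.swap a b (g x) ≠ x := by
  have ha := (hfix a).2 (Or.inl rfl)
  have hb := (hfix b).2 (Or.inr rfl)
  rcases eq_or_ne x a with rfl | hxa
  · simpa [ha] using hab.symm
  rcases eq_or_ne x b with rfl | hxb
  · simpa [hb] using hab
  rw [hg.swap_apply_of_ne ha hb hxa hxb]
  exact fun h => by simpa [hxa, hxb] using (hfix x).1 h

end SwapComp

section Crossings

def adjacentPartner {m : ℕ} (j : Fin m) : Fin m :=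
  if h : j.val % 2 = 0 ∧ j.val + 1 < m then ⟨j + 1, h.2⟩
  else if j.val % 2 = 1 then ⟨j - 1, by omega⟩ else j

theorem val_adjacentPartner {m : ℕ} (j : Fin m) : (adjacentPartner j).val =
    if j.val % 2 = 0 ∧ j.val + 1 < m then j.val + 1
    else if j.val % 2 = 1 then j.val - 1 else j.val := by
  unfold adjacentPartner
  split_ifs <;> rfl

theorem adjacentPartner_involutive (m : ℕ) : Function.Involutive (@adjacentPartner m) :=
  fun j => Fin.ext <| by
    have := j.isLt
    rw [val_adjacentPartner, val_adjacentPartner]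
    split_ifs <;> omega

theorem adjacentPartner_eq_self_iff {m : ℕ} (j : Fin m) :
    adjacentPartner j = j ↔ Odd m ∧ j.val + 1 = m := by
  have := j.isLt
  rw [Fin.ext_iff, val_adjacentPartner, Nat.odd_iff]
  split_ifs <;> omega

variable (n : List ℕ)

def pairInSyllables (x : Cr n) : Cr n := ⟨x.1, adjacentPartner x.2⟩

theorem pairInSyllables_involutive : Function.Involutive (pairInSyllables n) := fun x => by
  simp only [pairInSyllables, adjacentPartner_involutive _ x.2]

theorem pairInSyllables_eq_self_iff (x : Cr n) :
    pairInSyllables n x = x ↔ Odd (n.get x.1) ∧ x.2.val + 1 = n.get x.1 := by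
  rw [← adjacentPartner_eq_self_iff, pairInSyllables, Sigma.mk.inj_iff, heq_iff_eq]
  exact and_iff_right rfl

def lastCrossing (i : Fin n.length) (h : 0 < n.get i) : Cr n := ⟨i, ⟨n.get i - 1, by omega⟩⟩

theorem eq_lastCrossing_iff {i : Fin n.length} (h : 0 < n.get i) (x : Cr n) :
    x = lastCrossing n i h ↔ x.1 = i ∧ x.2.val + 1 = n.get i := by
  obtain ⟨j, y⟩ := x
  constructor
  · rintro ⟨⟩
    exact ⟨rfl, Nat.sub_add_cancel h⟩
  · rintro ⟨rfl, hy⟩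
    simp only [lastCrossing, Sigma.mk.inj_iff, heq_iff_eq, true_and]
    ext
    exact Nat.eq_sub_of_add_eq hy

theorem result_getD (p : List (Cr n × ℤ)) (i : ℕ) (hi : i < n.length) :
    (result n p).getD i 0 = ∑ c : Cr n with c.1 = ⟨i, hi⟩, signOf p c := by
  rw [List.getD_eq_getElem _ _ (by simpa [result] using hi)]
  simp only [result, List.getElem_map, List.getElem_finRange]
  exact sum_map_snd_filter_eq_sum_signOf p (fun c => c.1 = ⟨i, hi⟩)


theorem canForce_endSyllables {i₀ i₁ : Fin n.length} (hne : i₀ ≠ i₁)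
    (hodd : ∀ i, Odd (n.get i) ↔ i = i₀ ∨ i = i₁) :
    CanForce (C := Cr n) 1 fun p => ∃ s : ℤ, (s = 1 ∨ s = -1) ∧
      ∑ c : Cr n with c.1 = i₀, signOf p c = s ∧ ∑ c : Cr n with c.1 = i₁, signOf p c = -s ∧
      ∀ i, i ≠ i₀ → i ≠ i₁ → ∑ c : Cr n with c.1 = i, signOf p c = 0 := by
  set a := lastCrossing n i₀ ((hodd i₀).2 (Or.inl rfl)).pos
  set b := lastCrossing n i₁ ((hodd i₁).2 (Or.inr rfl)).pos
  have hfix : ∀ x, pairInSyllables n x = x ↔ x = a ∨ x = b := by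
    rintro ⟨i, j⟩
    rw [pairInSyllables_eq_self_iff, eq_lastCrossing_iff, eq_lastCrossing_iff, hodd]
    constructor
    · rintro ⟨rfl | rfl, h⟩ <;> simp [h]
    · rintro (⟨rfl, h⟩ | ⟨rfl, h⟩) <;> simp [h]
  have hab : a ≠ b := fun h => hne (congrArg Sigma.fst h)
  have : Nonempty (Cr n) := ⟨a⟩
  have hg := pairInSyllables_involutive n
  have ha : pairInSyllables n a = a := (hfix a).2 (Or.inl rfl)
  have hb : pairInSyllables n b = b := (hfix b).2 (Or.inr rfl)
  have hfa : (Equiv.swap a b ∘ pairInSyllables n) a = b := by simp [ha]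
  have hforce := canForce_fiberSums Sigma.fst (hg.swap_comp ha hb)
    (hg.swap_apply_ne_self hab hfix) a (by rw [hfa]; exact hne.symm) fun c hca hcb => by
      rw [Function.comp_apply, hg.swap_apply_of_ne ha hb hca (hfa ▸ hcb)]; rfl
  rw [hfa] at hforce
  exact hforce.mono fun p _ _ ⟨hsign, hsum₀, hsum₁, hsum⟩ => ⟨_, hsign, hsum₀, hsum₁, hsum⟩

end Crossings

/-- in the resolution game on `(n_1, …, n_k)` with `k ≥ 3`, `n_1` and
`n_k` odd, and all intermediate `n_i` even, the second player can force
`s_1 = -s_k ∈ {1, -1}` and `s_i = 0` for all `1 < i < k`. -/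
theorem second_forces_opposite_ends (n : List ℕ) (hk : 3 ≤ n.length)
    (h1 : Odd (n.getD 0 0)) (hlast : Odd (n.getD (n.length - 1) 0))
    (hmid : ∀ i : ℕ, 0 < i → i < n.length - 1 → Even (n.getD i 0)) :
    CanForce (C := Cr n) 1 (fun p =>
      ((result n p).getD 0 0 = 1 ∨ (result n p).getD 0 0 = -1) ∧
      (result n p).getD 0 0 = -((result n p).getD (n.length - 1) 0) ∧
      ∀ i : ℕ, 0 < i → i < n.length - 1 → (result n p).getD i 0 = 0) := by
  have hlen₀ : 0 < n.length := by omega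
  have hlen₁ : n.length - 1 < n.length := by omega
  have hodd : ∀ i : Fin n.length, Odd (n.get i) ↔ i = ⟨0, hlen₀⟩ ∨ i = ⟨n.length - 1, hlen₁⟩ := by
    rintro ⟨i, hi⟩
    rw [← List.getD_eq_get (d := 0), Fin.mk.injEq, Fin.mk.injEq]
    refine ⟨fun h => ?_, by rintro (rfl | rfl) <;> assumption⟩
    by_contra! hne
    exact Nat.not_even_iff_odd.2 h (hmid i (by omega) (by omega))
  refine (canForce_endSyllables n (by simp only [ne_eq, Fin.mk.injEq]; omega) hodd).mono
    fun p _ _ ⟨s, hs, hsum₀, hsum₁, hsum⟩ => ?_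
  rw [result_getD n p _ hlen₀, result_getD n p _ hlen₁, hsum₀, hsum₁, neg_neg]
  refine ⟨hs, rfl, fun i hi₀ hi => ?_⟩
  rw [result_getD n p i (by omega)]
  exact hsum _ (by simp only [ne_eq, Fin.mk.injEq]; omega)
    (by simp only [ne_eq, Fin.mk.injEq]; omega)
end
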